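/- Under the standing assumptions, the diagonal blocks Z_{ii} of the inverse A⁻¹ satisfy the identity −C_{i−1}L_{i−1}Z_{ii} − B_iM_{i+1}Z_{ii} + A_iZ_{ii} = I for i = 1,…,n, where C_0 = B_n = 0, L_0 = M_{n+1} = 0, and L_i, M_i are the matrices defined by the recursions L_1 = T_1 = A_1⁻¹B_1, T_i = I − A_i⁻¹C_{i−1}L_{i−1}, L_i = T_i⁻¹A_i⁻¹B_i (i = 2,…,n−1) and M_n = W_n = A_n⁻¹C_{n−1}, W_i = I − A_i⁻¹B_iM_{i+1}, M_i = W_i⁻¹A_i⁻¹C_{i−1} (i = n−1,…,2). -/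

import Mathlib

/-!
Read off the block column `j` of `A * A⁻¹ = I`: all of its block rows except the `j`-th are
homogeneous. Eliminating them from the top gives `Z_{i-1,j} = -L_{i-1} Z_{i,j}` for `i ≤ j`, and
eliminating them from the bottom gives `Z_{i+1,j} = -M_{i+1} Z_{i,j}` for `i ≥ j`; substituting
both into the `i`-th block row of column `i` gives the identity.

The eliminations need `T_i` and `W_i` to be invertible. Row diagonal dominance propagates
`‖L_i‖ ≤ 1`, since `L_i = A_i⁻¹B_i + A_i⁻¹C_{i-1}L_{i-1}L_i`. Because `B_i` is invertible,
`‖A_i⁻¹C_{i-1}‖ < 1`, so `‖A_i⁻¹C_{i-1}L_{i-1}‖ < 1` and `T_i` is invertible by the Neumann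
series; `M_i` and `W_i` are handled in the same way.
-/

open scoped Matrix
attribute [local instance] Matrix.linftyOpNormedRing

/-- The block tridiagonal matrix with diagonal blocks `A 1, …, A n`, superdiagonal blocks
`B 1, …, B (n-1)` and subdiagonal blocks `C 1, …, C (n-1)`. -/
noncomputable def blockTridiag (n m : ℕ) (A B C : ℕ → Matrix (Fin m) (Fin m) ℂ) :
    Matrix (Fin n × Fin m) (Fin n × Fin m) ℂ :=
  Matrix.of fun p q =>
    if p.1 = q.1 then A ((p.1 : ℕ) + 1) p.2 q.2
    else if (p.1 : ℕ) + 1 = (q.1 : ℕ) then B ((p.1 : ℕ) + 1) p.2 q.2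
    else if (q.1 : ℕ) + 1 = (p.1 : ℕ) then C ((q.1 : ℕ) + 1) p.2 q.2
    else 0

open Finset

theorem sum_range_tridiag_mul {R : Type*} [NonUnitalNonAssocSemiring R] {n i : ℕ} (hi : i < n)
    (a b c : R) (z : ℕ → R) (hc : i = 0 → c = 0) (hb : i + 1 = n → b = 0) :
    ∑ r ∈ range n, (if i = r then a else if i + 1 = r then b else if r + 1 = i then c else 0) * z r
      = c * z (i - 1) + a * z i + b * z (i + 1) := by
  have hsplit : ∀ r,
      (if i = r then a else if i + 1 = r then b else if r + 1 = i then c else 0) * z r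
        = (if i = r then a * z r else 0) + (if i + 1 = r then b * z r else 0)
          + (if r + 1 = i then c * z r else 0) := by
    intro r
    split_ifs <;> first | omega | simp
  have hB : (if i + 1 < n then b * z (i + 1) else 0) = b * z (i + 1) := by
    split_ifs
    · rfl
    · simp [hb (by omega)]
  have hC : ∑ r ∈ range n, (if r + 1 = i then c * z r else 0) = c * z (i - 1) := by
    rcases i with _ | i
    · simp [hc rfl]
    · simp [show i < n by omega]
  simp only [hsplit, sum_add_distrib, sum_ite_eq, mem_range, if_pos hi, hB, hC]
  abel

-- `Z 0 j` and `Z (n + 1) j` are unconstrained; they only occur multiplied by `C 0 = 0`, `B n = 0`.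
theorem blockTridiag_inv_block_row {n m : ℕ} {A B C : ℕ → Matrix (Fin m) (Fin m) ℂ}
    (hC0 : C 0 = 0) (hBn : B n = 0) (hN : IsUnit (blockTridiag n m A B C))
    {Z : ℕ → ℕ → Matrix (Fin m) (Fin m) ℂ}
    (hZ : ∀ i j : Fin n, Z ((i : ℕ) + 1) ((j : ℕ) + 1) =
      Matrix.of fun k l => (blockTridiag n m A B C)⁻¹ (i, k) (j, l))
    {i j : ℕ} (hi : 1 ≤ i) (hin : i ≤ n) (hj : 1 ≤ j) (hjn : j ≤ n) :
    C (i - 1) * Z (i - 1) j + A i * Z i j + B i * Z (i + 1) j = if i = j then 1 else 0 := by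
  obtain ⟨i, rfl⟩ : ∃ i', i = i' + 1 := ⟨i - 1, by omega⟩
  obtain ⟨j, rfl⟩ : ∃ j', j = j' + 1 := ⟨j - 1, by omega⟩
  set N := blockTridiag n m A B C
  let e := (Matrix.compRingEquiv (Fin n) (Fin m) ℂ).symm
  have hprod : e N * e N⁻¹ = 1 := by
    rw [← map_mul, Matrix.mul_nonsing_inv _ ((Matrix.isUnit_iff_isUnit_det N).mp hN), map_one]
  have hblock : ∀ r : Fin n, e N ⟨i, by omega⟩ r * e N⁻¹ r ⟨j, by omega⟩ =
      (if i = r then A (i + 1) else if i + 1 = r then B (i + 1) else if r + 1 = i then C i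
        else 0) * Z (r + 1) (j + 1) := by
    intro r
    rw [hZ r ⟨j, by omega⟩]
    congr 1
    ext k l
    simp only [e, N, Matrix.compRingEquiv_symm_apply, Matrix.comp_symm_apply, blockTridiag,
      Matrix.of_apply, Fin.ext_iff]
    split_ifs <;> first | omega | simp_all
  have hentry := congrFun (congrFun hprod ⟨i, by omega⟩) ⟨j, by omega⟩
  rw [Matrix.mul_apply, sum_congr rfl fun r _ => hblock r,
    Fin.sum_univ_eq_sum_range (fun r => (if i = r then A (i + 1) else if i + 1 = r then B (i + 1)
      else if r + 1 = i then C i else 0) * Z (r + 1) (j + 1)),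
    sum_range_tridiag_mul (by omega) _ _ _ _ (by rintro rfl; exact hC0) (by rintro rfl; exact hBn),
    Matrix.one_apply] at hentry
  rcases i with _ | i <;> simpa [hC0, Fin.ext_iff, eq_comm] using hentry

section Sweep

variable {R : Type*}

-- With `c i = A_i⁻¹C_{i-1}` and `b i = A_i⁻¹B_i` this is the recursion for `L`; the recursion
-- for `M`, read from `i = n` downwards, is the same with `b` and `c` exchanged.
def IsTridiagSweep [Ring R] (k : ℕ) (c b x : ℕ → R) : Prop :=
  x 1 = b 1 ∧ ∀ i, 2 ≤ i → i ≤ k → x i = Ring.inverse (1 - c i * x (i - 1)) * b i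

theorem IsTridiagSweep.eq_neg_mul_succ [Ring R] {k p : ℕ} {c b x z : ℕ → R}
    (hx : IsTridiagSweep k c b x) (hu : ∀ i, 2 ≤ i → i ≤ k → IsUnit (1 - c i * x (i - 1)))
    (hc1 : c 1 = 0) (hpk : p ≤ k)
    (hz : ∀ i, 1 ≤ i → i ≤ p → c i * z (i - 1) + z i + b i * z (i + 1) = 0) :
    ∀ i, 1 ≤ i → i ≤ p → z i = -(x i * z (i + 1)) := by
  intro i hi hip
  induction i, hi using Nat.le_induction with
  | base =>
    have hrow := hz 1 le_rfl hip
    rw [hc1, zero_mul, zero_add] at hrow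
    rw [hx.1, eq_neg_iff_add_eq_zero, hrow]
  | succ i hi ih =>
    have hrow := hz (i + 1) (by omega) hip
    have hu' := hu (i + 1) (by omega) (by omega)
    rw [Nat.add_sub_cancel] at hrow hu'
    rw [ih (by omega)] at hrow
    have hsolve : (1 - c (i + 1) * x i) * z (i + 1) = -(b (i + 1) * z (i + 1 + 1)) :=
      eq_neg_of_add_eq_zero_left (by rw [← hrow]; noncomm_ring)
    rw [hx.2 _ (by omega) (by omega), Nat.add_sub_cancel, mul_assoc, ← mul_neg, ← hsolve,
      Ring.inverse_mul_cancel_left _ _ hu']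

theorem norm_lt_one_of_norm_add_norm_le_one [NormedRing R] {x y : R} (h : ‖x‖ + ‖y‖ ≤ 1)
    (hy : IsUnit y) : ‖x‖ < 1 := by
  rcases subsingleton_or_nontrivial R with _ | _
  · simp [Subsingleton.elim x 0]
  · linarith [norm_pos_iff.2 hy.ne_zero]

theorem isUnit_one_sub_mul_of_norm_lt_one [NormedRing R] [HasSummableGeomSeries R] {c l : R}
    (hc : ‖c‖ < 1) (hl : ‖l‖ ≤ 1) : IsUnit (1 - c * l) :=
  isUnit_one_sub_of_norm_lt_one <| (norm_mul_le c l).trans_lt <|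
    mul_lt_one_of_nonneg_of_lt_one_left (norm_nonneg c) hc hl

theorem norm_le_one_of_one_sub_mul_mul_eq [NormedRing R] {c l b y : R} (hdom : ‖c‖ + ‖b‖ ≤ 1)
    (hc : ‖c‖ < 1) (hl : ‖l‖ ≤ 1) (hy : (1 - c * l) * y = b) : ‖y‖ ≤ 1 := by
  have hfix : y = b + c * l * y := by rw [← hy]; noncomm_ring
  have hbound : ‖y‖ ≤ ‖b‖ + ‖c‖ * ‖y‖ :=
    calc ‖y‖ = ‖b + c * l * y‖ := by rw [← hfix]
      _ ≤ ‖b‖ + ‖c‖ * ‖l‖ * ‖y‖ := (norm_add_le _ _).trans (by gcongr; exact norm_mul₃_le)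
      _ ≤ ‖b‖ + ‖c‖ * ‖y‖ := by gcongr; exact mul_le_of_le_one_right (norm_nonneg c) hl
  nlinarith

theorem IsTridiagSweep.norm_le_one [NormedRing R] [HasSummableGeomSeries R] {k : ℕ}
    {c b x : ℕ → R} (hx : IsTridiagSweep k c b x)
    (hdom : ∀ i, 1 ≤ i → i ≤ k → ‖c i‖ + ‖b i‖ ≤ 1) (hc : ∀ i, 2 ≤ i → i ≤ k → ‖c i‖ < 1) :
    ∀ i, 1 ≤ i → i ≤ k → ‖x i‖ ≤ 1 := by
  intro i hi hik
  induction i, hi using Nat.le_induction with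
  | base => rw [hx.1]; linarith [hdom 1 le_rfl hik, norm_nonneg (c 1)]
  | succ i hi ih =>
    have hl := ih (by omega)
    have hc' := hc (i + 1) (by omega) hik
    refine norm_le_one_of_one_sub_mul_mul_eq (hdom _ (by omega) hik) hc' hl ?_
    rw [hx.2 _ (by omega) hik, Nat.add_sub_cancel,
      Ring.mul_inverse_cancel_left _ _ (isUnit_one_sub_mul_of_norm_lt_one hc' hl)]

theorem IsTridiagSweep.isUnit_one_sub_mul [NormedRing R] [HasSummableGeomSeries R] {k : ℕ}
    {c b x : ℕ → R} (hx : IsTridiagSweep k c b x)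
    (hdom : ∀ i, 1 ≤ i → i ≤ k → ‖c i‖ + ‖b i‖ ≤ 1) (hc : ∀ i, 2 ≤ i → i ≤ k → ‖c i‖ < 1) :
    ∀ i, 2 ≤ i → i ≤ k → IsUnit (1 - c i * x (i - 1)) := fun i hi hik =>
  isUnit_one_sub_mul_of_norm_lt_one (hc i hi hik) (hx.norm_le_one hdom hc _ (by omega) (by omega))

end Sweep

theorem blockTridiag_inv_block_row_of_ne {n m : ℕ} {A B C : ℕ → Matrix (Fin m) (Fin m) ℂ}
    (hC0 : C 0 = 0) (hBn : B n = 0) (hN : IsUnit (blockTridiag n m A B C))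
    {Z : ℕ → ℕ → Matrix (Fin m) (Fin m) ℂ}
    (hZ : ∀ i j : Fin n, Z ((i : ℕ) + 1) ((j : ℕ) + 1) =
      Matrix.of fun k l => (blockTridiag n m A B C)⁻¹ (i, k) (j, l))
    (hA : ∀ i, 1 ≤ i → i ≤ n → IsUnit (A i))
    (i j : ℕ) (hi : 1 ≤ i) (hin : i ≤ n) (hj : 1 ≤ j) (hjn : j ≤ n) (hij : i ≠ j) :
    (A i)⁻¹ * C (i - 1) * Z (i - 1) j + Z i j + (A i)⁻¹ * B i * Z (i + 1) j = 0 := by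
  have hrow := congrArg ((A i)⁻¹ * ·) (blockTridiag_inv_block_row hC0 hBn hN hZ hi hin hj hjn)
  simpa [if_neg hij, mul_add, ← mul_assoc,
    Matrix.nonsing_inv_mul _ ((Matrix.isUnit_iff_isUnit_det _).mp (hA i hi hin))] using hrow

-- The L∞ operator norm induces the product uniformity, so completeness comes from `ι → ι → α`.
instance {ι α : Type*} [Fintype ι] [DecidableEq ι] [NormedRing α] [CompleteSpace α] :
    HasSummableGeomSeries (Matrix ι ι α) :=
  @instHasSummableGeomSeriesOfCompleteSpace _ _ (inferInstanceAs (CompleteSpace (ι → ι → α)))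

theorem blockTridiag_inv_above_diag {n m : ℕ} {A B C L T : ℕ → Matrix (Fin m) (Fin m) ℂ}
    (hC0 : C 0 = 0) (hBn : B n = 0) (hN : IsUnit (blockTridiag n m A B C))
    {Z : ℕ → ℕ → Matrix (Fin m) (Fin m) ℂ}
    (hZ : ∀ i j : Fin n, Z ((i : ℕ) + 1) ((j : ℕ) + 1) =
      Matrix.of fun k l => (blockTridiag n m A B C)⁻¹ (i, k) (j, l))
    (hA : ∀ i, 1 ≤ i → i ≤ n → IsUnit (A i)) (hB : ∀ i, 1 ≤ i → i ≤ n - 1 → IsUnit (B i))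
    (hdom : ∀ i, 1 ≤ i → i ≤ n → ‖(A i)⁻¹ * C (i - 1)‖ + ‖(A i)⁻¹ * B i‖ ≤ 1)
    (hL1 : L 1 = (A 1)⁻¹ * B 1)
    (hT : ∀ i, 2 ≤ i → i ≤ n - 1 → T i = 1 - (A i)⁻¹ * C (i - 1) * L (i - 1))
    (hL : ∀ i, 2 ≤ i → i ≤ n - 1 → L i = (T i)⁻¹ * ((A i)⁻¹ * B i))
    {i : ℕ} (hi : 2 ≤ i) (hin : i ≤ n) :
    Z (i - 1) i = -(L (i - 1) * Z i i) := by
  have hLs : IsTridiagSweep (n - 1) (fun i => (A i)⁻¹ * C (i - 1)) (fun i => (A i)⁻¹ * B i) L :=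
    ⟨hL1, fun i h1 h2 => by rw [hL i h1 h2, hT i h1 h2, Matrix.nonsing_inv_eq_ringInverse]⟩
  have hc : ∀ i, 2 ≤ i → i ≤ n - 1 → ‖(A i)⁻¹ * C (i - 1)‖ < 1 := fun i h1 h2 =>
    norm_lt_one_of_norm_add_norm_le_one (hdom i (by omega) (by omega))
      ((Matrix.isUnit_nonsing_inv_iff.2 (hA i (by omega) (by omega))).mul (hB i (by omega) h2))
  have h := hLs.eq_neg_mul_succ (z := fun r => Z r i)
    (hLs.isUnit_one_sub_mul (fun i h1 h2 => hdom i h1 (by omega)) hc) (by simp [hC0])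
    (p := i - 1) (by omega)
    (fun r h1 h2 => blockTridiag_inv_block_row_of_ne hC0 hBn hN hZ hA r i h1 (by omega)
      (by omega) hin (by omega)) (i - 1) (by omega) le_rfl
  rwa [Nat.sub_add_cancel (by omega)] at h

theorem blockTridiag_inv_below_diag {n m : ℕ} {A B C M W : ℕ → Matrix (Fin m) (Fin m) ℂ}
    (hC0 : C 0 = 0) (hBn : B n = 0) (hN : IsUnit (blockTridiag n m A B C))
    {Z : ℕ → ℕ → Matrix (Fin m) (Fin m) ℂ}
    (hZ : ∀ i j : Fin n, Z ((i : ℕ) + 1) ((j : ℕ) + 1) =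
      Matrix.of fun k l => (blockTridiag n m A B C)⁻¹ (i, k) (j, l))
    (hA : ∀ i, 1 ≤ i → i ≤ n → IsUnit (A i)) (hC : ∀ i, 1 ≤ i → i ≤ n - 1 → IsUnit (C i))
    (hdom : ∀ i, 1 ≤ i → i ≤ n → ‖(A i)⁻¹ * C (i - 1)‖ + ‖(A i)⁻¹ * B i‖ ≤ 1)
    (hMn : M n = (A n)⁻¹ * C (n - 1))
    (hW : ∀ i, 2 ≤ i → i ≤ n - 1 → W i = 1 - (A i)⁻¹ * B i * M (i + 1))
    (hM : ∀ i, 2 ≤ i → i ≤ n - 1 → M i = (W i)⁻¹ * ((A i)⁻¹ * C (i - 1)))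
    {i : ℕ} (hi : 1 ≤ i) (hin : i ≤ n - 1) :
    Z (i + 1) i = -(M (i + 1) * Z i i) := by
  have hMs : IsTridiagSweep (n - 1) (fun j => (A (n + 1 - j))⁻¹ * B (n + 1 - j))
      (fun j => (A (n + 1 - j))⁻¹ * C (n + 1 - j - 1)) (fun j => M (n + 1 - j)) := by
    refine ⟨by simpa using hMn, fun j h1 h2 => ?_⟩
    dsimp only
    rw [hM _ (by omega) (by omega), hW _ (by omega) (by omega), Matrix.nonsing_inv_eq_ringInverse,
      show n + 1 - (j - 1) = n + 1 - j + 1 by omega]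
  have hb : ∀ j, 2 ≤ j → j ≤ n - 1 → ‖(A (n + 1 - j))⁻¹ * B (n + 1 - j)‖ < 1 := fun j h1 h2 =>
    norm_lt_one_of_norm_add_norm_le_one ((add_comm _ _).trans_le (hdom _ (by omega) (by omega)))
      ((Matrix.isUnit_nonsing_inv_iff.2 (hA _ (by omega) (by omega))).mul
        (hC _ (by omega) (by omega)))
  have h := hMs.eq_neg_mul_succ (z := fun r => Z (n + 1 - r) i)
    (hMs.isUnit_one_sub_mul
      (fun j h1 h2 => (add_comm _ _).trans_le (hdom _ (by omega) (by omega))) hb)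
    (by simp [hBn]) (p := n - i) (by omega) (fun r h1 h2 => by
      rw [show n + 1 - (r - 1) = n + 1 - r + 1 by omega,
        show n + 1 - (r + 1) = n + 1 - r - 1 by omega,
        ← blockTridiag_inv_block_row_of_ne hC0 hBn hN hZ hA (n + 1 - r) i (by omega) (by omega)
          hi (by omega) (by omega)]
      abel) (n - i) (by omega) le_rfl
  simpa only [show n + 1 - (n - i) = i + 1 by omega, show n + 1 - (n - i + 1) = i by omega]
    using h

theorem diag_block_identity_general
    (n m : ℕ)
    (A B C : ℕ → Matrix (Fin m) (Fin m) ℂ)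
    (hC0 : C 0 = 0) (hBn : B n = 0)
    (hAinv : IsUnit (blockTridiag n m A B C))
    (hB : ∀ i, 1 ≤ i → i ≤ n - 1 → IsUnit (B i))
    (hC : ∀ i, 1 ≤ i → i ≤ n - 1 → IsUnit (C i))
    (hAi : ∀ i, 1 ≤ i → i ≤ n → IsUnit (A i))
    (hdom : ∀ i, 1 ≤ i → i ≤ n → ‖(A i)⁻¹ * C (i - 1)‖ + ‖(A i)⁻¹ * B i‖ ≤ 1)
    (L T : ℕ → Matrix (Fin m) (Fin m) ℂ)
    (hL1 : L 1 = (A 1)⁻¹ * B 1)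
    (hT : ∀ i, 2 ≤ i → i ≤ n - 1 → T i = 1 - (A i)⁻¹ * C (i - 1) * L (i - 1))
    (hL : ∀ i, 2 ≤ i → i ≤ n - 1 → L i = (T i)⁻¹ * ((A i)⁻¹ * B i))
    (M W : ℕ → Matrix (Fin m) (Fin m) ℂ)
    (hMn : M n = (A n)⁻¹ * C (n - 1))
    (hW : ∀ i, 2 ≤ i → i ≤ n - 1 → W i = 1 - (A i)⁻¹ * B i * M (i + 1))
    (hM : ∀ i, 2 ≤ i → i ≤ n - 1 → M i = (W i)⁻¹ * ((A i)⁻¹ * C (i - 1)))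
    (Z : ℕ → ℕ → Matrix (Fin m) (Fin m) ℂ)
    (hZ : ∀ i j : Fin n, Z ((i : ℕ) + 1) ((j : ℕ) + 1) =
      Matrix.of fun k l => (blockTridiag n m A B C)⁻¹ (i, k) (j, l)) :
    ∀ i, 1 ≤ i → i ≤ n →
      -(C (i - 1) * L (i - 1) * Z i i) - B i * M (i + 1) * Z i i + A i * Z i i = 1 := by
  intro i hi hin
  have above : C (i - 1) * Z (i - 1) i = -(C (i - 1) * L (i - 1) * Z i i) := by
    rcases (show i = 1 ∨ 2 ≤ i by omega) with rfl | hi2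
    · simp [hC0]
    · rw [blockTridiag_inv_above_diag hC0 hBn hAinv hZ hAi hB hdom hL1 hT hL hi2 hin, mul_neg,
        mul_assoc]
  have below : B i * Z (i + 1) i = -(B i * M (i + 1) * Z i i) := by
    rcases (show i = n ∨ i ≤ n - 1 by omega) with rfl | hin'
    · simp [hBn]
    · rw [blockTridiag_inv_below_diag hC0 hBn hAinv hZ hAi hC hdom hMn hW hM hi hin', mul_neg,
        mul_assoc]
  have hdiag := blockTridiag_inv_block_row hC0 hBn hAinv hZ hi hin hi hin
  rw [above, below, if_pos rfl] at hdiag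
  rw [← hdiag]
  abel

theorem diag_block_identity
    (n m : ℕ) (hn : 2 ≤ n) (hm : 1 ≤ m)
    (A B C : ℕ → Matrix (Fin m) (Fin m) ℂ)
    (hC0 : C 0 = 0) (hBn : B n = 0)
    (hAinv : IsUnit (blockTridiag n m A B C))
    (hB : ∀ i, 1 ≤ i → i ≤ n - 1 → IsUnit (B i))
    (hC : ∀ i, 1 ≤ i → i ≤ n - 1 → IsUnit (C i))
    (hAi : ∀ i, 1 ≤ i → i ≤ n → IsUnit (A i))
    (hdom : ∀ i, 1 ≤ i → i ≤ n → ‖(A i)⁻¹ * C (i - 1)‖ + ‖(A i)⁻¹ * B i‖ ≤ 1)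
    (hB1 : ‖(A 1)⁻¹ * B 1‖ < 1)
    (hCn : ‖(A n)⁻¹ * C (n - 1)‖ < 1)
    (L T : ℕ → Matrix (Fin m) (Fin m) ℂ)
    (hL1 : L 1 = (A 1)⁻¹ * B 1) (hT1 : T 1 = (A 1)⁻¹ * B 1)
    (hT : ∀ i, 2 ≤ i → i ≤ n - 1 → T i = 1 - (A i)⁻¹ * C (i - 1) * L (i - 1))
    (hL : ∀ i, 2 ≤ i → i ≤ n - 1 → L i = (T i)⁻¹ * ((A i)⁻¹ * B i))
    (M W : ℕ → Matrix (Fin m) (Fin m) ℂ)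
    (hMn : M n = (A n)⁻¹ * C (n - 1)) (hWn : W n = (A n)⁻¹ * C (n - 1))
    (hW : ∀ i, 2 ≤ i → i ≤ n - 1 → W i = 1 - (A i)⁻¹ * B i * M (i + 1))
    (hM : ∀ i, 2 ≤ i → i ≤ n - 1 → M i = (W i)⁻¹ * ((A i)⁻¹ * C (i - 1)))
    (hL0 : L 0 = 0) (hMn1 : M (n + 1) = 0)
    (Z : ℕ → ℕ → Matrix (Fin m) (Fin m) ℂ)
    (hZ : ∀ i j : Fin n, Z ((i : ℕ) + 1) ((j : ℕ) + 1) =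
      Matrix.of fun k l => (blockTridiag n m A B C)⁻¹ (i, k) (j, l)) :
    ∀ i, 1 ≤ i → i ≤ n →
      -(C (i - 1) * L (i - 1) * Z i i) - B i * M (i + 1) * Z i i + A i * Z i i = 1 :=
  diag_block_identity_general n m A B C hC0 hBn hAinv hB hC hAi hdom L T hL1 hT hL M W hMn hW hM Z
    hZ
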